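/- arXiv:1811.07714 — 3 statements merged into one kernel-verified Lean document; each statement's English description precedes it below -/
import Mathlib

section
/- Let K be a field, let V and W be finite-dimensional K-vector spaces, and let f : V →ₗ[K] W be a linear map of rank r (i.e., r = dim of the range of f). Then for every k, the induced map ⋀^k f : ⋀^k V →ₗ[K] ⋀^k W on k-th exterior powers has rank equal to the binomial coefficient C(r, k). -/
/-!
Over a field, `f` factors through its range as a surjection followed by an injection, and
`⋀^k` preserves both surjections and injections. Hence the range of `⋀^k f` is a copy of
`⋀^k (range f)`, whose dimension is `C(r, k)`.
-/

/-- The linear map induced on `k`-th exterior powers by a linear map `f : V →ₗ[K] W`. -/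
noncomputable def exteriorPowerMap (K : Type*) [Field K] {V W : Type*}
    [AddCommGroup V] [Module K V] [AddCommGroup W] [Module K W]
    (k : ℕ) (f : V →ₗ[K] W) : ⋀[K]^k V →ₗ[K] ⋀[K]^k W :=
  (ExteriorAlgebra.map f).toLinearMap.restrict
    (p := ⋀[K]^k V) (q := ⋀[K]^k W) (by
      intro x hx
      rw [← ExteriorAlgebra.ιMulti_span_fixedDegree] at hx
      induction hx using Submodule.span_induction with
      | mem y hy =>
          obtain ⟨mvec, rfl⟩ := hy
          rw [AlgHom.toLinearMap_apply, ExteriorAlgebra.map_apply_ιMulti]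
          exact ExteriorAlgebra.ιMulti_range K k (Set.mem_range_self _)
      | zero => simp
      | add y z _ _ hy hz => rw [map_add]; exact Submodule.add_mem _ hy hz
      | smul c y _ hy => rw [map_smul]; exact Submodule.smul_mem _ _ hy)

theorem exteriorPowerMap_eq_map {K V W : Type*} [Field K]
    [AddCommGroup V] [Module K V] [AddCommGroup W] [Module K W] (k : ℕ) (f : V →ₗ[K] W) :
    exteriorPowerMap K k f = exteriorPower.map k f := by
  ext v
  simp only [exteriorPowerMap, LinearMap.compAlternatingMap_apply, LinearMap.coe_restrict_apply,
    exteriorPower.ιMulti_apply_coe, AlgHom.toLinearMap_apply, ExteriorAlgebra.map_apply_ιMulti,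
    exteriorPower.map_apply_ιMulti]

namespace exteriorPower

theorem finrank_range_map {K V W : Type*} [Field K]
    [AddCommGroup V] [Module K V] [AddCommGroup W] [Module K W] [FiniteDimensional K V]
    (k : ℕ) (f : V →ₗ[K] W) :
    Module.finrank K (LinearMap.range (map k f)) =
      (Module.finrank K (LinearMap.range f)).choose k := by
  have hfactor : (LinearMap.range f).subtype ∘ₗ f.rangeRestrict = f :=
    LinearMap.subtype_comp_codRestrict _ _ _
  have hrange : LinearMap.range (map k f) =
      LinearMap.range (map k (LinearMap.range f).subtype) :=
    calc LinearMap.range (map k f)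
        = LinearMap.range (map k ((LinearMap.range f).subtype ∘ₗ f.rangeRestrict)) := by
          rw [hfactor]
      _ = LinearMap.range (map k (LinearMap.range f).subtype) := by
          rw [map_comp, LinearMap.range_comp_of_range_eq_top]
          exact LinearMap.range_eq_top.2 (map_surjective f.surjective_rangeRestrict)
  rw [hrange, LinearMap.finrank_range_of_inj (map_injective_field (Submodule.injective_subtype _)),
    finrank_eq]

end exteriorPower

theorem rank_exteriorPowerMap_general (K : Type*) [Field K] (V W : Type*)
    [AddCommGroup V] [Module K V] [AddCommGroup W] [Module K W]
    [FiniteDimensional K V]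
    (f : V →ₗ[K] W) (r : ℕ) (hr : Module.finrank K (LinearMap.range f) = r) (k : ℕ) :
    Module.finrank K (LinearMap.range (exteriorPowerMap K k f)) = Nat.choose r k := by
  rw [exteriorPowerMap_eq_map, exteriorPower.finrank_range_map, hr]

/-- If `f : V →ₗ[K] W` has rank `r`, then the induced map `⋀^k f` on `k`-th exterior powers
has rank `C(r, k)`. -/
theorem rank_exteriorPowerMap (K : Type*) [Field K] (V W : Type*)
    [AddCommGroup V] [Module K V] [AddCommGroup W] [Module K W]
    [FiniteDimensional K V] [FiniteDimensional K W]
    (f : V →ₗ[K] W) (r : ℕ) (hr : Module.finrank K (LinearMap.range f) = r) (k : ℕ) :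
    Module.finrank K (LinearMap.range (exteriorPowerMap K k f)) = Nat.choose r k :=
  rank_exteriorPowerMap_general K V W f r hr k
end

section
/- Let K be an algebraically closed field of characteristic zero, and in the polynomial ring K[T₁, …, T₁₁] set F = T₃T₈ + T₄T₉ + T₁T₇ and G = T₅T₉ + T₆T₁₁ + T₂T₇. Then the quotient ring K[T₁, …, T₁₁]/(F, G) is an integral domain (equivalently, the affine variety {F = G = 0} ⊂ K¹¹ is irreducible and reduced). -/
/-!
Write `F = T₃T₈ + c` and `G = T₆T₁₁ + d`, where `c = T₄T₉ + T₁T₇` and `d = T₅T₉ + T₂T₇` are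
nonzero and lie in `B = K[T₁, T₂, T₄, T₅, T₇, T₉, T₁₀]`. Everything rests on one fact: over a
domain `D`, if `a ∈ D` is prime and `a ∤ c`, then `aX + c` is prime in `D[X]`, because it
generates the kernel of the substitution `X ↦ -c/a` into `Frac D`. Taking `a = x` makes
`xy + c` prime in `D[x][y]` whenever `c ≠ 0`. So `G` generates a prime ideal of
`A = B[T₆, T₁₁]`, `c ∉ (G)` for degree reasons, and `(F, G)` is the preimage of the prime ideal
`(T₃T₈ + c̄)` of `(A/(G))[T₃, T₈]`.
-/

open MvPolynomial

/-- `F = T₃T₈ + T₄T₉ + T₁T₇` (variables `T₁, …, T₁₁` indexed by `Fin 11`, `Tᵢ = X (i-1)`). -/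
noncomputable def Fpoly (K : Type*) [Field K] : MvPolynomial (Fin 11) K :=
  X 2 * X 7 + X 3 * X 8 + X 0 * X 6

/-- `G = T₅T₉ + T₆T₁₁ + T₂T₇`. -/
noncomputable def Gpoly (K : Type*) [Field K] : MvPolynomial (Fin 11) K :=
  X 4 * X 8 + X 5 * X 10 + X 1 * X 6

open scoped Polynomial

namespace Polynomial

noncomputable def xyAdd {R : Type*} [CommRing R] (c : R) : R[X][X] :=
  C X * X + C (C c)

variable {D : Type*} [CommRing D] [IsDomain D]

theorem C_mul_X_add_C_dvd_of_eval₂_eq_zero {a c : D} (ha : Prime a) (hc : ¬ a ∣ c) {f : D[X]}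
    (hf : f.eval₂ (algebraMap D (FractionRing D)) (algebraMap D _ (-c) / algebraMap D _ a) = 0) :
    C a * X + C c ∣ f := by
  have hinj := IsFractionRing.injective D (FractionRing D)
  have hroot : (f.scaleRoots a).IsRoot (-c) := by
    apply hinj
    rw [map_zero, ← eval₂_at_apply]
    exact scaleRoots_eval₂_eq_zero_of_eval₂_div_eq_zero hinj hf
      (mem_nonZeroDivisors_of_ne_zero ha.ne_zero)
  obtain ⟨q, hq⟩ := dvd_iff_isRoot.2 hroot
  -- substituting `a * X` for `X` in `f.scaleRoots a` gives `a ^ deg f * f`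
  have hsubst : C a ^ f.natDegree * f = (C a * X + C c) * q.eval₂ C (C a * X) := by
    have h := scaleRoots_eval₂_mul (p := f) C X a
    rw [eval₂_C_X, hq, eval₂_mul] at h
    rw [← h]
    simp
  have hCa : Prime (C a) := prime_C_iff.2 ha
  have hndvd : ¬ C a ∣ C a * X + C c := fun h =>
    hc (by simpa using (C_dvd_iff_dvd_coeff _ _).1 h 0)
  obtain ⟨r, hr⟩ := hCa.pow_dvd_of_dvd_mul_left _ hndvd ⟨f, hsubst.symm⟩
  refine ⟨r, mul_left_cancel₀ (pow_ne_zero f.natDegree hCa.ne_zero) ?_⟩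
  rw [hsubst, hr, mul_left_comm]

theorem prime_C_mul_X_add_C {a c : D} (ha : Prime a) (hc : ¬ a ∣ c) : Prime (C a * X + C c) := by
  let φ := eval₂RingHom (algebraMap D (FractionRing D)) (algebraMap D _ (-c) / algebraMap D _ a)
  have hker : RingHom.ker φ = Ideal.span {C a * X + C c} := by
    refine le_antisymm (fun f hf => Ideal.mem_span_singleton.2 ?_) ?_
    · exact C_mul_X_add_C_dvd_of_eval₂_eq_zero ha hc hf
    · rw [Ideal.span_singleton_le_iff_mem, RingHom.mem_ker]
      have : algebraMap D (FractionRing D) a ≠ 0 :=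
        (map_ne_zero_iff _ (IsFractionRing.injective D _)).2 ha.ne_zero
      simp [φ, mul_div_cancel₀ _ this]
  have hne : C a * X + C c ≠ 0 := fun h => by
    simpa [h] using natDegree_linear (b := c) ha.ne_zero
  exact (Ideal.span_singleton_prime hne).1 (hker ▸ RingHom.ker_isPrime φ)

theorem prime_xyAdd {c : D} (hc : c ≠ 0) : Prime (xyAdd c) :=
  prime_C_mul_X_add_C prime_X (by rwa [X_dvd_iff, coeff_C_zero])

theorem C_C_notMem_span_xyAdd {c : D} (hc : c ≠ 0) (d : D) :
    C (C c) ∉ Ideal.span {xyAdd d} := by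
  rw [Ideal.mem_span_singleton]
  intro h
  have := natDegree_le_of_dvd h (by simpa using hc)
  rw [xyAdd, natDegree_linear X_ne_zero, natDegree_C] at this
  exact one_ne_zero (Nat.le_zero.1 this)

theorem isPrime_span_xyAdd_C_C {A : Type*} [CommRing A] {g c : A}
    (hg : (Ideal.span {g}).IsPrime) (hc : c ∉ Ideal.span {g}) :
    (Ideal.span {xyAdd c, C (C g)}).IsPrime := by
  let π : A[X][X] →+* (A ⧸ Ideal.span {g})[X][X] := mapRingHom (mapRingHom (Ideal.Quotient.mk _))
  have hπ : Function.Surjective π :=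
    map_surjective _ (map_surjective _ Ideal.Quotient.mk_surjective)
  have hker : RingHom.ker π = Ideal.span {C (C g)} := by
    simp only [π, ker_mapRingHom, Ideal.mk_ker, Ideal.map_span, Set.image_singleton]
  have hspan : Ideal.span {xyAdd c, C (C g)} = (Ideal.span {π (xyAdd c)}).comap π := by
    rw [← Set.image_singleton (f := π), ← Ideal.map_span, Ideal.comap_map_of_surjective _ hπ,
      ← RingHom.ker_eq_comap_bot, hker, Ideal.span_insert]
  have : IsDomain (A ⧸ Ideal.span {g}) := (Ideal.Quotient.isDomain_iff_prime _).2 hg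
  have hc' : Ideal.Quotient.mk (Ideal.span {g}) c ≠ 0 := by
    rwa [Ne, Ideal.Quotient.eq_zero_iff_mem]
  have hprime := prime_xyAdd hc'
  have hπc : π (xyAdd c) = xyAdd (Ideal.Quotient.mk _ c) := by simp [π, xyAdd]
  rw [hspan, hπc]
  exact ((Ideal.span_singleton_prime hprime.ne_zero).2 hprime).comap π

end Polynomial

namespace MvPolynomial

noncomputable def finAddFourEquiv (R : Type*) [CommRing R] (n : ℕ) :
    MvPolynomial (Fin (n + 4)) R ≃ₐ[R] (MvPolynomial (Fin n) R)[X][X][X][X] :=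
  (finSuccEquiv R (n + 3)).trans <| Polynomial.mapAlgEquiv <| (finSuccEquiv R (n + 2)).trans <|
    Polynomial.mapAlgEquiv <| (finSuccEquiv R (n + 1)).trans <|
      Polynomial.mapAlgEquiv (finSuccEquiv R n)

end MvPolynomial

/-- Sends `T₈, T₃, T₁₁, T₆` to `0, 1, 2, 3`, the outer variables of `finAddFourEquiv`, and the
other seven variables, in order, to `4, …, 10`. -/
def varOrder : Equiv.Perm (Fin 11) :=
  ⟨![4, 5, 1, 6, 7, 3, 8, 0, 9, 10, 2], ![7, 2, 10, 5, 0, 1, 3, 4, 6, 8, 9], by decide, by decide⟩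

noncomputable def towerEquiv (R : Type*) [CommRing R] :
    MvPolynomial (Fin 11) R ≃ₐ[R] (MvPolynomial (Fin 7) R)[X][X][X][X] :=
  (renameEquiv R varOrder).trans (finAddFourEquiv R 7)

theorem towerEquiv_Fpoly (K : Type*) [Field K] :
    towerEquiv K (Fpoly K) =
      Polynomial.xyAdd
        (Polynomial.C (Polynomial.C (X 2 * X 5 + X 0 * X 4 : MvPolynomial (Fin 7) K))) := by
  simp [towerEquiv, finAddFourEquiv, Fpoly, varOrder, finSuccEquiv_apply, Fin.cases, Fin.induction,
    Fin.induction.go, Polynomial.xyAdd]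
  abel

theorem towerEquiv_Gpoly (K : Type*) [Field K] :
    towerEquiv K (Gpoly K) =
      Polynomial.C
        (Polynomial.C (Polynomial.xyAdd (X 3 * X 5 + X 1 * X 4 : MvPolynomial (Fin 7) K))) := by
  simp [towerEquiv, finAddFourEquiv, Gpoly, varOrder, finSuccEquiv_apply, Fin.cases, Fin.induction,
    Fin.induction.go, Polynomial.xyAdd]
  abel

theorem quotient_FG_isDomain_general (K : Type*) [Field K] :
    IsDomain (MvPolynomial (Fin 11) K ⧸ Ideal.span {Fpoly K, Gpoly K}) := by
  have hcF : (X 2 * X 5 + X 0 * X 4 : MvPolynomial (Fin 7) K) ≠ 0 := fun h => by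
    simpa using congr(eval ![0, 0, 1, 0, 0, 1, 0] $h)
  have hcG : (X 3 * X 5 + X 1 * X 4 : MvPolynomial (Fin 7) K) ≠ 0 := fun h => by
    simpa using congr(eval ![0, 0, 0, 1, 0, 1, 0] $h)
  have hG := Polynomial.prime_xyAdd hcG
  have hprime : (Ideal.span {towerEquiv K (Fpoly K), towerEquiv K (Gpoly K)}).IsPrime := by
    rw [towerEquiv_Fpoly, towerEquiv_Gpoly]
    exact Polynomial.isPrime_span_xyAdd_C_C ((Ideal.span_singleton_prime hG.ne_zero).2 hG)
      (Polynomial.C_C_notMem_span_xyAdd hcF _)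
  have hmap : (Ideal.span {towerEquiv K (Fpoly K), towerEquiv K (Gpoly K)}).map
      (towerEquiv K).symm = Ideal.span {Fpoly K, Gpoly K} := by
    rw [Ideal.map_span, Set.image_pair, AlgEquiv.symm_apply_apply, AlgEquiv.symm_apply_apply]
  rw [Ideal.Quotient.isDomain_iff_prime, ← hmap]
  exact Ideal.map_isPrime_of_equiv _

/-- The ring `K[T₁, …, T₁₁]/(F, G)` is an integral domain: the affine cone
`X̄ = {F = G = 0} ⊂ K¹¹` is irreducible and reduced. -/
theorem quotient_FG_isDomain (K : Type*) [Field K] [IsAlgClosed K] [CharZero K] :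
    IsDomain (MvPolynomial (Fin 11) K ⧸ Ideal.span {Fpoly K, Gpoly K}) :=
  quotient_FG_isDomain_general K
end

section
/- Let K be an algebraically closed field of characteristic zero, and in the polynomial ring K[T₁, …, T₁₁] set F = T₃T₈ + T₄T₉ + T₁T₇, G = T₅T₉ + T₆T₁₁ + T₂T₇, and H = T₇ + T₁T₁₁² + T₂T₈T₁₁ + T₂T₁₀² + T₂T₈T₉. Then the quotient ring K[T₁, …, T₁₁]/(F, G, H) is an integral domain (equivalently, the affine variety {F = G = H = 0} ⊂ K¹¹ is irreducible and reduced). -/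
/-!
Where `T₈T₉ ≠ 0` the equations can be solved for `T₇, T₃, T₅` (first `H`, then `F`, `G`), which
gives a homomorphism `rationalParam` from `K[T]` to its fraction field killing `(F, G, H)`. Up to a
power of `T₈T₉`, every polynomial is congruent modulo `(F, G, H)` to one free of `T₃, T₅, T₇`, on
which `rationalParam` is injective; so its kernel is `(F, G, H)` as soon as `T₈` and `T₉` are
nonzerodivisors modulo `(F, G, H)`. For that, set the variable to zero: the reduced triple has only
Koszul syzygies, since eliminating `T₇` turns the reduced `F` into a binomial `TᵢTⱼ - m` with `m`
free of `Tᵢ`, which is prime, and the reduced `G` into a polynomial free of `Tᵢ`, which it cannot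
divide. The binomial is prime by the same localization argument, at `Tⱼ`.
-/

open MvPolynomial

/-- `H = T₇ + T₁T₁₁² + T₂T₈T₁₁ + T₂T₁₀² + T₂T₈T₉`. -/
noncomputable def Hpoly (K : Type*) [Field K] : MvPolynomial (Fin 11) K :=
  X 6 + X 0 * X 10 ^ 2 + X 1 * X 7 * X 10 + X 1 * X 9 ^ 2 + X 1 * X 7 * X 8

section Reduction

variable {A : Type*} [CommRing A]

/-- Such a `ρ` identifies `A ⧸ (x)` with its image. -/
structure IsReductionMod (ρ : A →+* A) (x : A) : Prop where
  map_self : ρ x = 0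
  dvd_sub_map : ∀ p, x ∣ p - ρ p

namespace IsReductionMod

variable {ρ : A →+* A} {x : A}

theorem dvd_of_map_eq_zero (hρ : IsReductionMod ρ x) {p : A} (hp : ρ p = 0) : x ∣ p := by
  simpa [hp] using hρ.dvd_sub_map p

theorem map_map (hρ : IsReductionMod ρ x) (p : A) : ρ (ρ p) = ρ p := by
  obtain ⟨c, hc⟩ := hρ.dvd_sub_map p
  have := congrArg ρ hc
  rw [map_sub, map_mul, hρ.map_self, zero_mul, sub_eq_zero] at this
  exact this.symm

theorem dvd_sub_of_map_eq (hρ : IsReductionMod ρ x) {p q : A} (h : ρ p = ρ q) : x ∣ p - q :=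
  hρ.dvd_of_map_eq_zero (by rw [map_sub, h, sub_self])

end IsReductionMod

def HasKoszulSyzygies (f g h : A) : Prop :=
  ∀ a b c : A, a * f + b * g + c * h = 0 →
    ∃ u v w : A, a = u * g + v * h ∧ b = -(u * f) + w * h ∧ c = -(v * f) - w * g

variable [IsDomain A]

theorem exists_eq_of_mul_add_mul_eq_zero {f g a b : A} (hf : Prime f) (hfg : ¬ f ∣ g)
    (h : a * f + b * g = 0) : ∃ n, a = n * g ∧ b = -(n * f) := by
  have hfbg : f ∣ b * g := ⟨-a, by linear_combination h⟩
  obtain ⟨n, hn⟩ := (hf.dvd_or_dvd hfbg).resolve_right hfg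
  have hfa : f * (a + n * g) = 0 := by linear_combination h - g * hn
  refine ⟨-n, ?_, by rw [hn]; ring⟩
  linear_combination (mul_eq_zero.mp hfa).resolve_left hf.ne_zero

theorem hasKoszulSyzygies_of_isReductionMod {τ : A →+* A} {f g h : A}
    (hτ : IsReductionMod τ h) (hh : h ≠ 0) (hf : Prime (τ f)) (hfg : ¬ τ f ∣ τ g) :
    HasKoszulSyzygies f g h := by
  intro a b c habc
  have hτabc : τ a * τ f + τ b * τ g = 0 := by
    simpa [hτ.map_self] using congrArg τ habc
  obtain ⟨n, ha, hb⟩ := exists_eq_of_mul_add_mul_eq_zero hf hfg hτabc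
  obtain ⟨v, hv⟩ : h ∣ a - n * g := by
    rw [show a - n * g = (a - τ a) - n * (g - τ g) by rw [ha]; ring]
    exact dvd_sub (hτ.dvd_sub_map a) ((hτ.dvd_sub_map g).mul_left n)
  obtain ⟨w, hw⟩ : h ∣ b + n * f := by
    rw [show b + n * f = (b - τ b) + n * (f - τ f) by rw [hb]; ring]
    exact dvd_add (hτ.dvd_sub_map b) ((hτ.dvd_sub_map f).mul_left n)
  have hc : h * (c + v * f + w * g) = 0 := by linear_combination habc - f * hv - g * hw
  refine ⟨n, v, w, by linear_combination hv, by linear_combination hw, ?_⟩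
  linear_combination (mul_eq_zero.mp hc).resolve_left hh

theorem mem_span_singleton_of_mul_mem {ρ : A →+* A} {x f q : A} (hρ : IsReductionMod ρ x)
    (hx : x ≠ 0) (hf : ρ f ≠ 0) (hq : x * q ∈ Ideal.span {f}) : q ∈ Ideal.span {f} := by
  obtain ⟨k, hk⟩ := Ideal.mem_span_singleton'.mp hq
  have hρk : ρ k = 0 := by
    have := congrArg ρ hk
    rw [map_mul, map_mul, hρ.map_self, zero_mul] at this
    exact (mul_eq_zero.mp this).resolve_right hf
  obtain ⟨k₁, rfl⟩ := hρ.dvd_of_map_eq_zero hρk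
  exact Ideal.mem_span_singleton'.mpr ⟨k₁, mul_left_cancel₀ hx (by linear_combination hk)⟩

theorem mem_span_triple_of_mul_mem {ρ : A →+* A} {x f g h q : A} (hρ : IsReductionMod ρ x)
    (hx : x ≠ 0) (hK : HasKoszulSyzygies (ρ f) (ρ g) (ρ h))
    (hq : x * q ∈ Ideal.span {f, g, h}) : q ∈ Ideal.span {f, g, h} := by
  obtain ⟨a, b, c, habc⟩ := Submodule.mem_span_triple.mp hq
  simp only [smul_eq_mul] at habc
  have hρabc : ρ a * ρ f + ρ b * ρ g + ρ c * ρ h = 0 := by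
    simpa [hρ.map_self] using congrArg ρ habc
  obtain ⟨u, v, w, ha, hb, hc⟩ := hK _ _ _ hρabc
  obtain ⟨a₁, ha₁⟩ : x ∣ a - (ρ u * g + ρ v * h) :=
    hρ.dvd_sub_of_map_eq (by simpa [hρ.map_map] using congrArg ρ ha)
  obtain ⟨b₁, hb₁⟩ : x ∣ b - (-(ρ u * f) + ρ w * h) :=
    hρ.dvd_sub_of_map_eq (by simpa [hρ.map_map] using congrArg ρ hb)
  obtain ⟨c₁, hc₁⟩ : x ∣ c - (-(ρ v * f) - ρ w * g) :=
    hρ.dvd_sub_of_map_eq (by simpa [hρ.map_map] using congrArg ρ hc)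
  have hq₁ : q = a₁ * f + b₁ * g + c₁ * h :=
    mul_left_cancel₀ hx (by linear_combination -habc + f * ha₁ + g * hb₁ + h * hc₁)
  exact Submodule.mem_span_triple.mpr ⟨a₁, b₁, c₁, by simp [hq₁]⟩

end Reduction

section KernelCriterion

variable {A L : Type*} [CommRing A] [CommRing L]

theorem RingHom.ker_eq_of_exists_pow_mul_sub_mem (φ ψ : A →+* L) (hψ : Function.Injective ψ)
    {I : Ideal A} (hI : I ≤ RingHom.ker φ) {s : A} (hs : ∀ q, s * q ∈ I → q ∈ I)
    (hnf : ∀ p, ∃ N : ℕ, ∃ r ∈ φ.eqLocus ψ, s ^ N * p - r ∈ I) : RingHom.ker φ = I := by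
  refine le_antisymm (fun p hp => ?_) hI
  obtain ⟨N, r, hr, hmem⟩ := hnf p
  have hφr : φ r = 0 := by
    simpa [RingHom.mem_ker.mp hp] using RingHom.mem_ker.mp (hI hmem)
  have hr0 : r = 0 := (injective_iff_map_eq_zero ψ).mp hψ r (hr.symm.trans hφr)
  rw [hr0, sub_zero] at hmem
  induction N with
  | zero => simpa using hmem
  | succ N ih => exact ih (hs _ (by rwa [pow_succ', mul_assoc] at hmem))

end KernelCriterion

namespace MvPolynomial

section NormalForm

variable {R σ L : Type*} [CommRing R] [CommRing L]

theorem exists_pow_mul_sub_mem_eqLocus {φ ψ : MvPolynomial σ R →+* L} (hC : φ.comp C = ψ.comp C)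
    (I : Ideal (MvPolynomial σ R)) {s : MvPolynomial σ R} (hs : s ∈ φ.eqLocus ψ)
    (hX : ∀ k, ∃ N : ℕ, ∃ r ∈ φ.eqLocus ψ, s ^ N * X k - r ∈ I) (p : MvPolynomial σ R) :
    ∃ N : ℕ, ∃ r ∈ φ.eqLocus ψ, s ^ N * p - r ∈ I := by
  induction p using MvPolynomial.induction_on with
  | C a => exact ⟨0, C a, RingHom.congr_fun hC a, by simp⟩
  | add p q hp hq =>
    obtain ⟨N₁, r₁, hr₁, h₁⟩ := hp
    obtain ⟨N₂, r₂, hr₂, h₂⟩ := hq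
    refine ⟨N₁ + N₂, s ^ N₂ * r₁ + s ^ N₁ * r₂,
      add_mem (mul_mem (pow_mem hs _) hr₁) (mul_mem (pow_mem hs _) hr₂), ?_⟩
    have e : s ^ (N₁ + N₂) * (p + q) - (s ^ N₂ * r₁ + s ^ N₁ * r₂)
        = s ^ N₂ * (s ^ N₁ * p - r₁) + s ^ N₁ * (s ^ N₂ * q - r₂) := by ring
    rw [e]
    exact add_mem (I.mul_mem_left _ h₁) (I.mul_mem_left _ h₂)
  | mul_X p k hp =>
    obtain ⟨N, r, hr, h⟩ := hp
    obtain ⟨M, r', hr', h'⟩ := hX k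
    refine ⟨N + M, r * r', mul_mem hr hr', ?_⟩
    have e : s ^ (N + M) * (p * X k) - r * r'
        = (s ^ N * p - r) * (s ^ M * X k) + r * (s ^ M * X k - r') := by ring
    rw [e]
    exact add_mem (I.mul_mem_right _ h) (I.mul_mem_left _ h')

end NormalForm

section ReplaceVar

variable {R σ : Type*} [CommRing R] [DecidableEq σ]

/-- Below, `replaceVar i 0 p = p` expresses that `p` does not involve `X i`. -/
noncomputable def replaceVar (i : σ) (t : MvPolynomial σ R) :
    MvPolynomial σ R →+* MvPolynomial σ R :=
  eval₂Hom C (Function.update X i t)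

@[simp]
theorem replaceVar_C (i : σ) (t : MvPolynomial σ R) (a : R) : replaceVar i t (C a) = C a := by
  simp [replaceVar]

@[simp]
theorem replaceVar_X (i : σ) (t : MvPolynomial σ R) (k : σ) :
    replaceVar i t (X k) = if k = i then t else X k := by
  simp [replaceVar, Function.update_apply]

theorem replaceVar_comp_replaceVar_zero (i : σ) (t : MvPolynomial σ R) :
    (replaceVar i t).comp (replaceVar i 0) = replaceVar i 0 := by
  ext k <;> simp only [RingHom.comp_apply, replaceVar_C, replaceVar_X]
  split_ifs <;> simp_all

theorem replaceVar_eq_self {i : σ} {t p : MvPolynomial σ R} (hp : replaceVar i 0 p = p) :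
    replaceVar i t p = p := by
  rw [← hp, ← RingHom.comp_apply, replaceVar_comp_replaceVar_zero]

theorem X_sub_ne_zero [Nontrivial R] {i : σ} {t : MvPolynomial σ R} (ht : replaceVar i 0 t = t) :
    X i - t ≠ 0 := by
  intro h
  have h0 : t = 0 := by simpa [ht] using congrArg (replaceVar i 0) h
  simp [h0] at h

theorem isReductionMod_replaceVar (i : σ) {t : MvPolynomial σ R} (ht : replaceVar i 0 t = t) :
    IsReductionMod (replaceVar i t) (X i - t) := by
  refine ⟨by simp [replaceVar_eq_self ht], fun p => ?_⟩
  let J := Ideal.span {(X i - t : MvPolynomial σ R)}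
  have h : (Ideal.Quotient.mk J).comp (replaceVar i t) = Ideal.Quotient.mk J := by
    ext k
    · simp
    · by_cases hk : k = i
      · subst hk
        rw [RingHom.comp_apply, replaceVar_X, if_pos rfl, Ideal.Quotient.eq, ← neg_sub]
        exact J.neg_mem (Ideal.mem_span_singleton_self _)
      · simp [hk]
  rw [← Ideal.mem_span_singleton, ← Ideal.Quotient.eq, ← RingHom.comp_apply, h]

theorem isReductionMod_replaceVar_zero (i : σ) :
    IsReductionMod (replaceVar i (0 : MvPolynomial σ R)) (X i) := by
  simpa using isReductionMod_replaceVar (R := R) i (t := 0) (map_zero _)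

end ReplaceVar

section Binomial

variable {R σ : Type*} [CommRing R] [IsDomain R] [DecidableEq σ] {i j : σ}
  {m : MvPolynomial σ R}

local notation "Frac" => algebraMap (MvPolynomial σ R) (FractionRing (MvPolynomial σ R))

noncomputable def solveBinomial (i j : σ) (m : MvPolynomial σ R) :
    MvPolynomial σ R →+* FractionRing (MvPolynomial σ R) :=
  eval₂Hom ((Frac).comp C) (Function.update (fun k => Frac (X k)) i (Frac m / Frac (X j)))

theorem solveBinomial_comp_C : (solveBinomial i j m).comp C = (Frac).comp C :=
  eval₂Hom_comp_C _ _

theorem solveBinomial_X_of_ne {k : σ} (hk : k ≠ i) : solveBinomial i j m (X k) = Frac (X k) := by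
  simp [solveBinomial, hk]

theorem solveBinomial_eq_algebraMap {p : MvPolynomial σ R} (hp : replaceVar i 0 p = p) :
    solveBinomial i j m p = Frac p := by
  have h : (solveBinomial i j m).comp (replaceVar i 0) = (Frac).comp (replaceVar i 0) := by
    ext k
    · simp [solveBinomial]
    · by_cases hk : k = i <;> simp [hk, solveBinomial_X_of_ne]
  rw [← hp, ← RingHom.comp_apply, h, RingHom.comp_apply]

theorem mem_span_triple_of_X_mul_mem {k : σ} {f g h t q : MvPolynomial σ R}
    (hh : replaceVar j 0 h = X k - t) (ht : replaceVar k 0 t = t)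
    (hf : Prime (replaceVar k t (replaceVar j 0 f)))
    (hfg : ¬ replaceVar k t (replaceVar j 0 f) ∣ replaceVar k t (replaceVar j 0 g))
    (hq : X j * q ∈ Ideal.span {f, g, h}) : q ∈ Ideal.span {f, g, h} := by
  have hK : HasKoszulSyzygies (replaceVar j 0 f) (replaceVar j 0 g) (replaceVar j 0 h) := by
    rw [hh]
    exact hasKoszulSyzygies_of_isReductionMod (isReductionMod_replaceVar k ht) (X_sub_ne_zero ht)
      hf hfg
  exact mem_span_triple_of_mul_mem (isReductionMod_replaceVar_zero j) (X_ne_zero j) hK hq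

variable (hij : i ≠ j) (hm : replaceVar i 0 m = m)
include hij hm

theorem solveBinomial_X_mul_X_sub : solveBinomial i j m (X i * X j - m) = 0 := by
  have hXj : Frac (X j) ≠ 0 := by simp [X_ne_zero]
  rw [map_sub, map_mul, solveBinomial_X_of_ne hij.symm, solveBinomial_eq_algebraMap hm]
  simp [solveBinomial, div_mul_cancel₀ _ hXj]

theorem ker_solveBinomial (hmj : replaceVar j 0 m ≠ 0) :
    RingHom.ker (solveBinomial i j m) = Ideal.span {X i * X j - m} := by
  refine RingHom.ker_eq_of_exists_pow_mul_sub_mem _ _ (IsFractionRing.injective _ _) ?_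
    (s := X j) (fun q hq => mem_span_singleton_of_mul_mem (isReductionMod_replaceVar_zero j)
      (X_ne_zero j) (by simpa [hij.symm] using hmj) hq) ?_
  · rw [Ideal.span_le, Set.singleton_subset_iff]
    exact solveBinomial_X_mul_X_sub hij hm
  refine exists_pow_mul_sub_mem_eqLocus solveBinomial_comp_C _ (solveBinomial_X_of_ne hij.symm)
    fun k => ?_
  by_cases hk : k = i
  · subst hk
    exact ⟨1, m, solveBinomial_eq_algebraMap hm,
      Ideal.mem_span_singleton'.mpr ⟨1, by ring⟩⟩
  · exact ⟨0, X k, solveBinomial_X_of_ne hk, by simp⟩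

theorem prime_X_mul_X_sub (hmj : replaceVar j 0 m ≠ 0) : Prime (X i * X j - m) := by
  have hne : X i * X j - m ≠ 0 := fun h =>
    hmj (by simpa [hij.symm] using congrArg (replaceVar j 0) h)
  rw [← Ideal.span_singleton_prime hne, ← ker_solveBinomial hij hm hmj]
  exact RingHom.ker_isPrime _

theorem X_mul_X_sub_not_dvd (hmj : replaceVar j 0 m ≠ 0) {g : MvPolynomial σ R}
    (hg : replaceVar i 0 g = g) (hg0 : g ≠ 0) : ¬ X i * X j - m ∣ g := by
  intro hdvd
  have hker : g ∈ RingHom.ker (solveBinomial i j m) := by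
    rw [ker_solveBinomial hij hm hmj]
    exact Ideal.mem_span_singleton.mpr hdvd
  rw [RingHom.mem_ker, solveBinomial_eq_algebraMap hg] at hker
  exact hg0 ((injective_iff_map_eq_zero _).mp (IsFractionRing.injective _ _) g hker)

end Binomial

end MvPolynomial

namespace FGH

variable (K : Type*) [Field K]

local notation "A" => MvPolynomial (Fin 11) K
local notation "Frac" => algebraMap A (FractionRing A)

noncomputable def Htail : A :=
  X 0 * X 10 ^ 2 + X 1 * X 7 * X 10 + X 1 * X 9 ^ 2 + X 1 * X 7 * X 8

theorem Hpoly_eq : Hpoly K = X 6 + Htail K := by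
  rw [Hpoly, Htail]; ring

local notation "I" => Ideal.span {Fpoly K, Gpoly K, Hpoly K}

theorem mem_of_X7_mul_mem {q : A} (hq : X 7 * q ∈ I) : q ∈ I := by
  set m : A := X 0 * X 10 ^ 2 + X 1 * X 9 ^ 2 with hm
  have hF : replaceVar 6 (-m) (replaceVar 7 0 (Fpoly K)) = X 3 * X 8 - X 0 * m := by
    simp [hm, Fpoly]; ring
  have hG : replaceVar 6 (-m) (replaceVar 7 0 (Gpoly K)) = X 4 * X 8 + X 5 * X 10 - X 1 * m := by
    simp [hm, Gpoly]; ring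
  have hm0 : replaceVar 8 0 (X 0 * m) ≠ 0 := fun h => by
    simpa [hm] using congrArg (eval fun k => if k = 1 then 0 else 1) h
  refine mem_span_triple_of_X_mul_mem (k := 6) (t := -m) (by simp [hm, Hpoly]; ring) (by simp [hm])
    ?_ ?_ hq
  · rw [hF]
    exact prime_X_mul_X_sub (by decide) (by simp [hm]) hm0
  · rw [hF, hG]
    refine X_mul_X_sub_not_dvd (by decide) (by simp [hm]) hm0 (by simp [hm]) fun h => ?_
    simpa [hm] using congrArg (eval fun k => if k = 4 ∨ k = 8 then 1 else 0) h

theorem mem_of_X8_mul_mem {q : A} (hq : X 8 * q ∈ I) : q ∈ I := by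
  set m : A := X 0 * X 10 ^ 2 + X 1 * X 7 * X 10 + X 1 * X 9 ^ 2 with hm
  have hF : replaceVar 6 (-m) (replaceVar 8 0 (Fpoly K)) = X 2 * X 7 - X 0 * m := by
    simp [hm, Fpoly]; ring
  have hG : replaceVar 6 (-m) (replaceVar 8 0 (Gpoly K)) = X 5 * X 10 - X 1 * m := by
    simp [hm, Gpoly]; ring
  have hm0 : replaceVar 7 0 (X 0 * m) ≠ 0 := fun h => by
    simpa [hm] using congrArg (eval fun k => if k = 1 then 0 else 1) h
  refine mem_span_triple_of_X_mul_mem (k := 6) (t := -m) (by simp [hm, Hpoly]; ring) (by simp [hm])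
    ?_ ?_ hq
  · rw [hF]
    exact prime_X_mul_X_sub (by decide) (by simp [hm]) hm0
  · rw [hF, hG]
    refine X_mul_X_sub_not_dvd (by decide) (by simp [hm]) hm0 (by simp [hm]) fun h => ?_
    simpa [hm] using congrArg (eval fun k => if k = 5 ∨ k = 10 then 1 else 0) h

noncomputable def rationalParam : A →+* FractionRing A :=
  eval₂Hom ((Frac).comp C) fun k =>
    if k = 2 then Frac (X 0 * Htail K - X 3 * X 8) / Frac (X 7)
    else if k = 4 then Frac (X 1 * Htail K - X 5 * X 10) / Frac (X 8)
    else if k = 6 then -Frac (Htail K)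
    else Frac (X k)

theorem rationalParam_X_of_ne {k : Fin 11} (h2 : k ≠ 2) (h4 : k ≠ 4) (h6 : k ≠ 6) :
    rationalParam K (X k) = Frac (X k) := by
  simp [rationalParam, h2, h4, h6]

theorem rationalParam_Htail : rationalParam K (Htail K) = Frac (Htail K) := by
  simp [rationalParam, Htail]

theorem span_FGH_le_ker : I ≤ RingHom.ker (rationalParam K) := by
  rw [Ideal.span_le]
  rintro _ (rfl | rfl | rfl)
  · simp [Fpoly, rationalParam]
  · simp [Gpoly, rationalParam]
  · rw [SetLike.mem_coe, RingHom.mem_ker, Hpoly_eq, map_add, rationalParam_Htail]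
    simp [rationalParam]

theorem ker_rationalParam : RingHom.ker (rationalParam K) = I := by
  refine RingHom.ker_eq_of_exists_pow_mul_sub_mem _ _ (IsFractionRing.injective _ _)
    (span_FGH_le_ker K) (s := X 7 * X 8)
    (fun q hq => mem_of_X7_mul_mem K (mem_of_X8_mul_mem K (by rwa [mul_left_comm, ← mul_assoc])))
    (exists_pow_mul_sub_mem_eqLocus (φ := rationalParam K) (eval₂Hom_comp_C _ _) _
      (by simp [RingHom.mem_eqLocus, rationalParam_X_of_ne]) fun k => ?_)
  rcases em (k = 2 ∨ k = 4 ∨ k = 6) with (rfl | rfl | rfl) | hk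
  · refine ⟨1, X 8 * (X 0 * Htail K - X 3 * X 8),
      by simp [RingHom.mem_eqLocus, rationalParam, Htail], ?_⟩
    exact Submodule.mem_span_triple.mpr ⟨X 8, 0, -(X 8 * X 0), by simp [Fpoly, Hpoly_eq]; ring⟩
  · refine ⟨1, X 7 * (X 1 * Htail K - X 5 * X 10),
      by simp [RingHom.mem_eqLocus, rationalParam, Htail], ?_⟩
    exact Submodule.mem_span_triple.mpr ⟨0, X 7, -(X 7 * X 1), by simp [Gpoly, Hpoly_eq]; ring⟩
  · refine ⟨0, -Htail K, by simp [RingHom.mem_eqLocus, rationalParam, Htail], ?_⟩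
    exact Submodule.mem_span_triple.mpr ⟨0, 0, 1, by simp [Hpoly_eq]⟩
  · simp only [not_or] at hk
    obtain ⟨h2, h4, h6⟩ := hk
    exact ⟨0, X k, rationalParam_X_of_ne K h2 h4 h6, by simp⟩

end FGH

theorem quotient_FGH_isDomain_general (K : Type*) [Field K] :
    IsDomain (MvPolynomial (Fin 11) K ⧸ Ideal.span {Fpoly K, Gpoly K, Hpoly K}) := by
  rw [Ideal.Quotient.isDomain_iff_prime, ← FGH.ker_rationalParam K]
  exact RingHom.ker_isPrime _

/-- The ring `K[T₁, …, T₁₁]/(F, G, H)` is an integral domain: the affine cone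
`Ȳ = {F = G = H = 0} ⊂ K¹¹` is irreducible and reduced. -/
theorem quotient_FGH_isDomain (K : Type*) [Field K] [IsAlgClosed K] [CharZero K] :
    IsDomain (MvPolynomial (Fin 11) K ⧸ Ideal.span {Fpoly K, Gpoly K, Hpoly K}) :=
  quotient_FGH_isDomain_general K
end
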